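/- If each f_n commutes with f, each f_n is feeble open (the image of every nonempty open set has nonempty interior) and surjective, Σ_{n=1}^∞ D(f_n, f) < ∞, and (X, f) is topologically transitive, then (X, F) is topologically transitive: for every pair of nonempty open sets U, V ⊆ X there exists n ∈ ℕ with ω_n(U) ∩ V ≠ ∅. -/

import Mathlib

/-!
Since `f_n` commutes with `f`, the error `d(f_{N+m} ∘ ⋯ ∘ f_{N+1} x, f^m x)` telescopes into at most
`∑_{j>N} D(f_j, f)`, so for `N` large every block `f_{N+m} ∘ ⋯ ∘ f_{N+1}` shadows `f^m` within `ε/2`,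
uniformly in `m`. Feeble openness makes `ω_N(U)` have nonempty interior `W`; transitivity of `f` sends a
point `w = ω_N u` of `W` into the `ε/2`-ball around a point of `V`, and then `ω_{N+m} u` lies in `V`.
-/

open Filter Metric Set

noncomputable def supD {X : Type*} [MetricSpace X] (g h : X → X) : ℝ :=
  ⨆ x, dist (g x) (h x)

def omega {X : Type*} (fn : ℕ → X → X) : ℕ → X → X
  | 0 => id
  | k + 1 => fn (k + 1) ∘ omega fn k

def omegaSeg {X : Type*} (fn : ℕ → X → X) (n : ℕ) : ℕ → X → X
  | 0 => id
  | k + 1 => fn (n + k + 1) ∘ omegaSeg fn n k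

section SupDist

variable {X : Type*} [MetricSpace X]

lemma supD_nonneg (g h : X → X) : 0 ≤ supD g h :=
  Real.iSup_nonneg fun _ => dist_nonneg

lemma dist_le_supD [CompactSpace X] {g h : X → X} (hg : Continuous g) (hh : Continuous h) (x : X) :
    dist (g x) (h x) ≤ supD g h :=
  le_ciSup (isCompact_range (hg.dist hh)).bddAbove x

end SupDist

lemma exists_forall_sum_range_add_lt {s : ℕ → ℝ} (hs : Summable s) (hs0 : ∀ n, 0 ≤ s n)
    {ε : ℝ} (hε : 0 < ε) : ∃ N, ∀ m, ∑ j ∈ Finset.range m, s (j + N) < ε := by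
  obtain ⟨N, hN⟩ := ((tendsto_sum_nat_add s).eventually (gt_mem_nhds hε)).exists
  refine ⟨N, fun m => lt_of_le_of_lt ?_ hN⟩
  exact ((summable_nat_add_iff N).mpr hs).sum_le_tsum _ (fun _ _ => hs0 _)

section Omega

variable {X : Type*} (fn : ℕ → X → X)

lemma omega_add (N m : ℕ) : omega fn (N + m) = omegaSeg fn N m ∘ omega fn N := by
  induction m with
  | zero => rfl
  | succ m ih => exact congrArg (fn (N + m + 1) ∘ ·) ih

lemma omegaSeg_succ' (N m : ℕ) : omegaSeg fn N (m + 1) = omegaSeg fn (N + 1) m ∘ fn (N + 1) := by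
  induction m generalizing N with
  | zero => rfl
  | succ m ih =>
    change fn (N + (m + 1) + 1) ∘ omegaSeg fn N (m + 1) = fn (N + 1 + m + 1) ∘ _
    rw [ih, show N + (m + 1) + 1 = N + 1 + m + 1 by omega]
    rfl

end Omega

lemma dist_omegaSeg_iterate_le {X : Type*} [MetricSpace X] [CompactSpace X] {f : X → X}
    {fn : ℕ → X → X} (hf : Continuous f) (hfn : ∀ n, Continuous (fn n))
    (hcomm : ∀ n, Function.Commute (fn n) f) (N m : ℕ) (x : X) :
    dist (omegaSeg fn N m x) (f^[m] x) ≤ ∑ j ∈ Finset.range m, supD (fn (j + N + 1)) f := by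
  induction m generalizing N x with
  | zero => simp [omegaSeg]
  | succ m ih =>
    have hfirst : dist (f^[m] (fn (N + 1) x)) (f^[m + 1] x) ≤ supD (fn (N + 1)) f := by
      rw [← (hcomm (N + 1)).iterate_right m x, Function.iterate_succ_apply']
      exact dist_le_supD (hfn _) hf _
    calc dist (omegaSeg fn N (m + 1) x) (f^[m + 1] x)
        ≤ dist (omegaSeg fn (N + 1) m (fn (N + 1) x)) (f^[m] (fn (N + 1) x)) +
            dist (f^[m] (fn (N + 1) x)) (f^[m + 1] x) := by
          rw [omegaSeg_succ']
          exact dist_triangle _ _ _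
      _ ≤ ∑ j ∈ Finset.range m, supD (fn (j + (N + 1) + 1)) f + supD (fn (N + 1)) f :=
          add_le_add (ih _ _) hfirst
      _ = ∑ j ∈ Finset.range (m + 1), supD (fn (j + N + 1)) f := by
          rw [Finset.sum_range_succ']
          simp only [add_right_comm _ 1 N, zero_add, add_assoc]

lemma exists_forall_dist_omegaSeg_iterate_lt {X : Type*} [MetricSpace X] [CompactSpace X]
    {f : X → X} {fn : ℕ → X → X} (hf : Continuous f) (hfn : ∀ n, Continuous (fn n))
    (hcomm : ∀ n, Function.Commute (fn n) f) (hsum : Summable fun n => supD (fn (n + 1)) f)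
    {ε : ℝ} (hε : 0 < ε) : ∃ N, ∀ m x, dist (omegaSeg fn N m x) (f^[m] x) < ε := by
  obtain ⟨N, hN⟩ := exists_forall_sum_range_add_lt hsum (fun _ => supD_nonneg _ _) hε
  exact ⟨N, fun m x => (dist_omegaSeg_iterate_le hf hfn hcomm N m x).trans_lt (hN m)⟩

section FeeblyOpen

variable {X Y Z : Type*} [TopologicalSpace X] [TopologicalSpace Y] [TopologicalSpace Z]

def IsFeeblyOpen (g : X → Y) : Prop :=
  ∀ U : Set X, IsOpen U → U.Nonempty → (interior (g '' U)).Nonempty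

lemma isFeeblyOpen_id : IsFeeblyOpen (id : X → X) := fun U hU hne => by
  rwa [image_id, hU.interior_eq]

lemma IsFeeblyOpen.comp {g : Y → Z} {h : X → Y} (hg : IsFeeblyOpen g) (hh : IsFeeblyOpen h) :
    IsFeeblyOpen (g ∘ h) := fun U hU hne => by
  rw [image_comp]
  exact (hg _ isOpen_interior (hh U hU hne)).mono
    (interior_mono (image_mono interior_subset))

lemma isFeeblyOpen_omega {fn : ℕ → X → X} (hfn : ∀ n, IsFeeblyOpen (fn n)) :
    ∀ n, IsFeeblyOpen (omega fn n)
  | 0 => isFeeblyOpen_id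
  | n + 1 => (hfn (n + 1)).comp (isFeeblyOpen_omega hfn n)

end FeeblyOpen

theorem stmt7_general {X : Type*} [MetricSpace X] [CompactSpace X]
    (f : X → X) (fn : ℕ → X → X)
    (hf : Continuous f)
    (hfn : ∀ n, Continuous (fn n))
    (hfo : ∀ n, ∀ U : Set X, IsOpen U → U.Nonempty → (interior (fn n '' U)).Nonempty)
    (hcomm : ∀ n, fn n ∘ f = f ∘ fn n)
    (hsum : Summable fun n => supD (fn (n + 1)) f)
    (htrans : ∀ U V : Set X, IsOpen U → IsOpen V → U.Nonempty → V.Nonempty →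
      ∃ n : ℕ, 1 ≤ n ∧ (f^[n] '' U ∩ V).Nonempty) :
    ∀ U V : Set X, IsOpen U → IsOpen V → U.Nonempty → V.Nonempty →
      ∃ n : ℕ, 1 ≤ n ∧ (omega fn n '' U ∩ V).Nonempty := by
  intro U V hU hV hUne ⟨v, hv⟩
  obtain ⟨ε, hε, hball⟩ := isOpen_iff.mp hV v hv
  obtain ⟨N, hN⟩ := exists_forall_dist_omegaSeg_iterate_lt hf hfn
    (fun n x => congrFun (hcomm n) x) hsum (half_pos hε)
  obtain ⟨m, hm, _, ⟨w, hw, rfl⟩, hwv⟩ := htrans (interior (omega fn N '' U)) (ball v (ε / 2))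
    isOpen_interior isOpen_ball (isFeeblyOpen_omega hfo N U hU hUne)
    ⟨v, mem_ball_self (half_pos hε)⟩
  obtain ⟨u, hu, rfl⟩ := interior_subset hw
  refine ⟨N + m, by omega, _, ⟨u, hu, rfl⟩, hball ?_⟩
  rw [omega_add, mem_ball]
  calc dist (omegaSeg fn N m (omega fn N u)) v
      ≤ dist (omegaSeg fn N m (omega fn N u)) (f^[m] (omega fn N u)) +
          dist (f^[m] (omega fn N u)) v := dist_triangle _ _ _
    _ < ε / 2 + ε / 2 := add_lt_add (hN m _) hwv
    _ = ε := add_halves ε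

theorem stmt7 {X : Type*} [MetricSpace X] [CompactSpace X] [Nonempty X]
    (f : X → X) (fn : ℕ → X → X)
    (hf : Continuous f) (hfsurj : Function.Surjective f)
    (hfn : ∀ n, Continuous (fn n))
    (hsurj : ∀ n, Function.Surjective (fn n))
    (hfo : ∀ n, ∀ U : Set X, IsOpen U → U.Nonempty → (interior (fn n '' U)).Nonempty)
    (hcomm : ∀ n, fn n ∘ f = f ∘ fn n)
    (hsum : Summable fun n => supD (fn (n + 1)) f)
    (htrans : ∀ U V : Set X, IsOpen U → IsOpen V → U.Nonempty → V.Nonempty →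
      ∃ n : ℕ, 1 ≤ n ∧ (f^[n] '' U ∩ V).Nonempty) :
    ∀ U V : Set X, IsOpen U → IsOpen V → U.Nonempty → V.Nonempty →
      ∃ n : ℕ, 1 ≤ n ∧ (omega fn n '' U ∩ V).Nonempty :=
  stmt7_general f fn hf hfn hfo hcomm hsum htrans
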